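/- arXiv:1807.05675 — 3 statements merged into one kernel-verified Lean document; each statement's English description precedes it below -/
import Mathlib

section
/- Let M ∈ ℝ^{n×p} and N ∈ ℝ^{n×k}, and suppose MᵀN has singular value decomposition UDVᵀ with U ∈ ℝ^{p×k}, V ∈ ℝ^{k×k} having orthonormal columns and D diagonal with nonnegative entries. Then A = UVᵀ minimizes ‖M − NAᵀ‖_F² over all A ∈ ℝ^{p×k} satisfying AᵀA = I_k. -/
/-!
With orthonormal columns, `‖M - N Bᵀ‖_F² = ‖M‖_F² + ‖N‖_F² - 2 tr(Bᵀ MᵀN)`, so minimizing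
means maximizing `tr(Bᵀ U D Vᵀ) = ∑ dᵢ ((BV)ᵀU)ᵢᵢ`. Both `BV` and `U` have orthonormal
columns, so each `((BV)ᵀU)ᵢᵢ` is an inner product of unit vectors, hence `≤ 1`; as `dᵢ ≥ 0`
the trace is at most `∑ dᵢ`, which `B = UVᵀ` attains.
-/

open Matrix

namespace Matrix

theorem transpose_mul_apply_self_le_one {m n : Type*} [Fintype m] [DecidableEq n]
    {X Y : Matrix m n ℝ} (hX : Xᵀ * X = 1) (hY : Yᵀ * Y = 1) (i : n) : (Xᵀ * Y) i i ≤ 1 := by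
  have hX' := congrFun (congrFun hX i) i
  have hY' := congrFun (congrFun hY i) i
  simp only [mul_apply, transpose_apply, one_apply_eq] at hX' hY' ⊢
  calc ∑ j, X j i * Y j i ≤ ∑ j, (X j i * X j i + Y j i * Y j i) / 2 :=
        Finset.sum_le_sum fun j _ => by nlinarith [sq_nonneg (X j i - Y j i)]
    _ = 1 := by rw [← Finset.sum_div, Finset.sum_add_distrib, hX', hY']; norm_num

section

variable {m n k : Type*} [Fintype m] [Fintype n] [Fintype k]

theorem sum_sum_sq_eq_trace_transpose_mul_self {R : Type*} [CommSemiring R] (X : Matrix m n R) :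
    ∑ i, ∑ j, X i j ^ 2 = (Xᵀ * X).trace := by
  simp only [trace, diag, mul_apply, transpose_apply, sq]
  exact Finset.sum_comm

theorem trace_transpose_mul_self_sub_mul_transpose {R : Type*} [CommRing R] [DecidableEq k]
    (M : Matrix m n R) (N : Matrix m k R) {B : Matrix n k R} (hB : Bᵀ * B = 1) :
    ((M - N * Bᵀ)ᵀ * (M - N * Bᵀ)).trace
      = (Mᵀ * M).trace + (Nᵀ * N).trace - 2 * (Bᵀ * (Mᵀ * N)).trace := by
  have hquad : (B * Nᵀ * (N * Bᵀ)).trace = (Nᵀ * N).trace := by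
    rw [Matrix.mul_assoc, trace_mul_comm, Matrix.mul_assoc, Matrix.mul_assoc, hB, Matrix.mul_one]
  have hcross_right : (Mᵀ * (N * Bᵀ)).trace = (Bᵀ * (Mᵀ * N)).trace := by
    rw [← Matrix.mul_assoc, trace_mul_comm]
  have hcross_left : (B * Nᵀ * M).trace = (Bᵀ * (Mᵀ * N)).trace := by
    rw [← trace_transpose, ← hcross_right]
    simp only [transpose_mul, transpose_transpose, Matrix.mul_assoc]
  simp only [transpose_sub, transpose_mul, transpose_transpose, Matrix.sub_mul, Matrix.mul_sub,
    trace_sub, hquad, hcross_left, hcross_right]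
  ring

end

section

variable {p k : Type*} [Fintype p] [Fintype k] [DecidableEq k]

theorem trace_transpose_mul_svd_le_sum {B U : Matrix p k ℝ} {V : Matrix k k ℝ} {d : k → ℝ}
    (hB : Bᵀ * B = 1) (hU : Uᵀ * U = 1) (hV : Vᵀ * V = 1) (hd : ∀ i, 0 ≤ d i) :
    (Bᵀ * (U * diagonal d * Vᵀ)).trace ≤ ∑ i, d i := by
  have hBV : (B * V)ᵀ * (B * V) = 1 := by
    rw [transpose_mul, Matrix.mul_assoc, ← Matrix.mul_assoc Bᵀ, hB, Matrix.one_mul, hV]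
  have htrace : (Bᵀ * (U * diagonal d * Vᵀ)).trace = ∑ i, ((B * V)ᵀ * U) i i * d i := by
    rw [← Matrix.mul_assoc, trace_mul_comm, transpose_mul, ← Matrix.mul_assoc,
      ← Matrix.mul_assoc]
    simp only [trace, diag, mul_diagonal]
  rw [htrace]
  exact Finset.sum_le_sum fun i _ =>
    mul_le_of_le_one_left (hd i) (transpose_mul_apply_self_le_one hBV hU i)

theorem trace_transpose_mul_svd_eq_sum {U : Matrix p k ℝ} {V : Matrix k k ℝ} (d : k → ℝ)
    (hU : Uᵀ * U = 1) (hV : Vᵀ * V = 1) :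
    ((U * Vᵀ)ᵀ * (U * diagonal d * Vᵀ)).trace = ∑ i, d i := by
  rw [transpose_mul, transpose_transpose, Matrix.mul_assoc, ← Matrix.mul_assoc Uᵀ,
    ← Matrix.mul_assoc Uᵀ, hU, Matrix.one_mul, ← Matrix.mul_assoc, trace_mul_comm,
    ← Matrix.mul_assoc, hV, Matrix.one_mul, trace_diagonal]

theorem transpose_mul_self_mul_transpose_eq_one {U : Matrix p k ℝ} {V : Matrix k k ℝ}
    (hU : Uᵀ * U = 1) (hV : Vᵀ * V = 1) : (U * Vᵀ)ᵀ * (U * Vᵀ) = 1 := by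
  rw [transpose_mul, transpose_transpose, Matrix.mul_assoc, ← Matrix.mul_assoc Uᵀ, hU,
    Matrix.one_mul, mul_eq_one_comm.mp hV]

end

end Matrix

/-- reduced rank Procrustes rotation: if MᵀN = U D Vᵀ (thin SVD),
then A = U Vᵀ minimizes ‖M − NAᵀ‖_F² over {A : AᵀA = I}. -/
theorem stmt1 (n p k : ℕ) (M : Matrix (Fin n) (Fin p) ℝ) (N : Matrix (Fin n) (Fin k) ℝ)
    (U : Matrix (Fin p) (Fin k) ℝ) (V : Matrix (Fin k) (Fin k) ℝ) (d : Fin k → ℝ)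
    (hU : Uᵀ * U = 1) (hV : Vᵀ * V = 1) (hd : ∀ i, 0 ≤ d i)
    (hSVD : Mᵀ * N = U * Matrix.diagonal d * Vᵀ) :
    ∀ A : Matrix (Fin p) (Fin k) ℝ, Aᵀ * A = 1 →
      (∑ i, ∑ j, (M i j - (N * (U * Vᵀ)ᵀ) i j) ^ 2)
        ≤ ∑ i, ∑ j, (M i j - (N * Aᵀ) i j) ^ 2 := by
  intro A hA
  have hUV := transpose_mul_self_mul_transpose_eq_one hU hV
  simp only [← Matrix.sub_apply, sum_sum_sq_eq_trace_transpose_mul_self,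
    trace_transpose_mul_self_sub_mul_transpose M N hA,
    trace_transpose_mul_self_sub_mul_transpose M N hUV, hSVD,
    trace_transpose_mul_svd_eq_sum d hU hV]
  linarith [trace_transpose_mul_svd_le_sum hA hU hV hd]
end

section
/- Let X ∈ ℝ^{n×p}, y ∈ ℝ^n, α ∈ ℝ^p, β ∈ ℝ, w > 0, and set u = (w Xα + β y)/(w + β²). Then for every v ∈ ℝ^p, ‖y − βXv‖₂² + w‖X − Xvαᵀ‖_F² = (w + β²)‖u − Xv‖₂² + C, where C is a constant not depending on v. Consequently, v minimizes ‖y − βXv‖₂² + w‖X − Xvαᵀ‖_F² over {v : ‖v‖₁ ≤ c} if and only if v minimizes ‖u − Xv‖₂² over {v : ‖v‖₁ ≤ c}. -/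
open Matrix

/-!
Expanding the rank-one residual with `‖α‖₂ = 1` turns the objective into a sum over rows of
quadratics in `tᵢ = (Xv)ᵢ` with common leading coefficient `w + β²`; completing the square in each
row centres them at `uᵢ`. The objective is therefore a positive multiple of `‖u − Xv‖₂²` plus a
constant, and both have the same minimizers on any set.
-/

theorem sum_sub_mul_sq_of_sum_sq_eq_one {ι : Type*} [Fintype ι] (x α : ι → ℝ)
    (hα : ∑ j, α j ^ 2 = 1) (t : ℝ) :
    ∑ j, (x j - t * α j) ^ 2 = ∑ j, x j ^ 2 - 2 * t * (x ⬝ᵥ α) + t ^ 2 := by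
  have h : ∀ j, (x j - t * α j) ^ 2 = x j ^ 2 - 2 * t * (x j * α j) + t ^ 2 * α j ^ 2 :=
    fun j => by ring
  simp only [h, Finset.sum_add_distrib, Finset.sum_sub_distrib, ← Finset.mul_sum, hα, dotProduct]
  ring

theorem sq_add_mul_eq_complete_square {β w : ℝ} (hk : w + β ^ 2 ≠ 0) (y s a t : ℝ) :
    (y - β * t) ^ 2 + w * (s - 2 * t * a + t ^ 2)
      = (w + β ^ 2) * ((w * a + β * y) / (w + β ^ 2) - t) ^ 2
        + (y ^ 2 + w * s - (w + β ^ 2) * ((w * a + β * y) / (w + β ^ 2)) ^ 2) := by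
  field_simp
  ring

theorem residual_add_rankOne_residual_eq {m n : Type*} [Fintype m] [Fintype n]
    (X : Matrix m n ℝ) (y : m → ℝ) (α : n → ℝ) {β w : ℝ} (hk : w + β ^ 2 ≠ 0)
    (hα : ∑ j, α j ^ 2 = 1) {u : m → ℝ}
    (hu : u = fun i => (w * (X *ᵥ α) i + β * y i) / (w + β ^ 2)) (t : m → ℝ) :
    (∑ i, (y i - β * t i) ^ 2) + w * ∑ i, ∑ j, (X i j - t i * α j) ^ 2
      = (w + β ^ 2) * ∑ i, (u i - t i) ^ 2
        + ∑ i, (y i ^ 2 + w * ∑ j, X i j ^ 2 - (w + β ^ 2) * u i ^ 2) := by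
  rw [Finset.mul_sum, ← Finset.sum_add_distrib, Finset.mul_sum, ← Finset.sum_add_distrib]
  refine Finset.sum_congr rfl fun i _ => ?_
  rw [sum_sub_mul_sq_of_sum_sq_eq_one _ α hα, sq_add_mul_eq_complete_square hk, hu]
  rfl

theorem forall_le_iff_of_eq_mul_add {V : Type*} {f g : V → ℝ} {k C : ℝ} (hk : 0 < k)
    (h : ∀ v, f v = k * g v + C) (P : V → Prop) (v₀ : V) :
    (∀ v, P v → f v₀ ≤ f v) ↔ (∀ v, P v → g v₀ ≤ g v) := by
  simp only [h, add_le_add_iff_right, mul_le_mul_iff_right₀ hk]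

/-- with u = (wXα + βy)/(w+β²), the SFM objective equals
(w+β²)‖u − Xv‖₂² + C, hence minimizing it over the ℓ1 ball is equivalent
to the LASSO bound-form problem. -/
theorem stmt3 (n p : ℕ) (X : Matrix (Fin n) (Fin p) ℝ) (y : Fin n → ℝ)
    (α : Fin p → ℝ) (β w c : ℝ) (hw : 0 < w) (hα : (∑ j, (α j) ^ 2) = 1)
    (u : Fin n → ℝ) (hu : u = fun i => (w * X.mulVec α i + β * y i) / (w + β ^ 2)) :
    ∃ C : ℝ,
      (∀ v : Fin p → ℝ,
        (∑ i, (y i - β * X.mulVec v i) ^ 2)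
          + w * ∑ i, ∑ j, (X i j - X.mulVec v i * α j) ^ 2
        = (w + β ^ 2) * (∑ i, (u i - X.mulVec v i) ^ 2) + C) ∧
      (∀ v₀ : Fin p → ℝ, (∑ j, |v₀ j|) ≤ c →
        ((∀ v : Fin p → ℝ, (∑ j, |v j|) ≤ c →
            (∑ i, (y i - β * X.mulVec v₀ i) ^ 2)
              + w * ∑ i, ∑ j, (X i j - X.mulVec v₀ i * α j) ^ 2
            ≤ (∑ i, (y i - β * X.mulVec v i) ^ 2)
              + w * ∑ i, ∑ j, (X i j - X.mulVec v i * α j) ^ 2)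
          ↔ (∀ v : Fin p → ℝ, (∑ j, |v j|) ≤ c →
              (∑ i, (u i - X.mulVec v₀ i) ^ 2) ≤ ∑ i, (u i - X.mulVec v i) ^ 2))) := by
  have hk : 0 < w + β ^ 2 := by positivity
  have identity := fun v : Fin p → ℝ =>
    residual_add_rankOne_residual_eq X y α hk.ne' hα hu (X *ᵥ v)
  exact ⟨_, identity, fun v₀ _ => forall_le_iff_of_eq_mul_add hk identity _ v₀⟩
end

section
/- Let K ≥ 1, and for k = 1,…,K let X_k ∈ ℝ^{n×p_k}, α_k, γ_k ∈ ℝ^{p_k} unit vectors, β ∈ ℝ^{K+1}, w_k > 0, U_{k'} = X_{k'}v_{k'} for k' ≠ k fixed, and U_{K+1} fixed. Then as a function of v_k ∈ ℝ^{p_k}, the multi-assay objective ‖y − Σ_{j} β_j U_j‖₂² + Σ_j w_j ‖X_j − U_j α_jᵀ − U_{K+1}γ_jᵀ‖_F² (with U_k = X_k v_k) equals (w_k + β_k²)‖u − X_k v_k‖₂² + C where C does not depend on v_k and u = (β_k y − Σ_{k'≠k} β_k β_{k'}U_{k'} + w_k X_k α_k − w_k U_{K+1} α_kᵀγ_k)/(w_k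 + β_k²). -/
open Matrix

/-- as a function of v_k, the multi-assay SFM objective equals
(w_k + β_k²)‖u − X_k v_k‖₂² + C, where u is the LASSO response given in the paper. -/
theorem stmt12 (n K : ℕ) (hK : 1 ≤ K) (p : Fin K → ℕ)
    (X : ∀ j : Fin K, Matrix (Fin n) (Fin (p j)) ℝ)
    (α γ : ∀ j : Fin K, Fin (p j) → ℝ)
    (hα : ∀ j, (∑ l, (α j l) ^ 2) = 1) (hγ : ∀ j, (∑ l, (γ j l) ^ 2) = 1)
    (β : Fin K → ℝ) (βK1 : ℝ) (w : Fin K → ℝ) (hw : ∀ j, 0 < w j)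
    (y UK1 : Fin n → ℝ) (k : Fin K)
    (vfix : ∀ j : Fin K, Fin (p j) → ℝ)
    (U : (Fin (p k) → ℝ) → Fin K → Fin n → ℝ)
    (hU : ∀ vk j, U vk j = if j = k then (X k).mulVec vk else (X j).mulVec (vfix j))
    (u : Fin n → ℝ)
    (hu : u = fun i =>
      (β k * y i
        - (∑ j ∈ Finset.univ.erase k, β k * β j * (X j).mulVec (vfix j) i)
        - β k * βK1 * UK1 i
        + w k * (X k).mulVec (α k) i
        - w k * UK1 i * (∑ l, α k l * γ k l)) / (w k + (β k) ^ 2)) :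
    ∃ C : ℝ, ∀ vk : Fin (p k) → ℝ,
      (∑ i, (y i - (∑ j, β j * U vk j i) - βK1 * UK1 i) ^ 2)
        + (∑ j, w j * ∑ i, ∑ l, (X j i l - U vk j i * α j l - UK1 i * γ j l) ^ 2)
      = (w k + (β k) ^ 2) * (∑ i, (u i - (X k).mulVec vk i) ^ 2) + C := by
  have hwk := hw k
  have hne : w k + (β k) ^ 2 ≠ 0 := by positivity
  set T : Fin n → ℝ := fun i => ∑ j ∈ Finset.univ.erase k, β j * (X j).mulVec (vfix j) i with hT
  set R : ℝ := ∑ j ∈ Finset.univ.erase k,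
      w j * ∑ i, ∑ l, (X j i l - (X j).mulVec (vfix j) i * α j l - UK1 i * γ j l) ^ 2 with hR
  refine ⟨(∑ i, ((y i - T i - βK1 * UK1 i) ^ 2
      + w k * ∑ l, (X k i l - UK1 i * γ k l) ^ 2
      - (w k + (β k) ^ 2) * (u i) ^ 2)) + R, ?_⟩
  intro vk
  have hsplit1 : ∀ i, (∑ j, β j * U vk j i) = β k * (X k).mulVec vk i + T i := by
    intro i
    rw [← Finset.add_sum_erase _ _ (Finset.mem_univ k)]
    congr 1
    · rw [hU]; simp
    · apply Finset.sum_congr rfl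
      intro j hj
      rw [hU]
      simp [Finset.ne_of_mem_erase hj]
  have hsplit2 : (∑ j, w j * ∑ i, ∑ l, (X j i l - U vk j i * α j l - UK1 i * γ j l) ^ 2)
      = w k * (∑ i, ∑ l, (X k i l - (X k).mulVec vk i * α k l - UK1 i * γ k l) ^ 2) + R := by
    rw [← Finset.add_sum_erase _ _ (Finset.mem_univ k)]
    congr 1
    · rw [hU]; simp
    · apply Finset.sum_congr rfl
      intro j hj
      rw [hU]
      simp [Finset.ne_of_mem_erase hj]
  simp only [hsplit1]
  rw [hsplit2]
  have main : ∀ i,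
      (y i - (β k * (X k).mulVec vk i + T i) - βK1 * UK1 i) ^ 2
        + w k * ∑ l, (X k i l - (X k).mulVec vk i * α k l - UK1 i * γ k l) ^ 2
      = (w k + (β k) ^ 2) * (u i - (X k).mulVec vk i) ^ 2
        + ((y i - T i - βK1 * UK1 i) ^ 2
          + w k * ∑ l, (X k i l - UK1 i * γ k l) ^ 2
          - (w k + (β k) ^ 2) * (u i) ^ 2) := by
    intro i
    have hPQ : (∑ l, (X k i l - UK1 i * γ k l) * α k l)
        = (X k).mulVec (α k) i - UK1 i * ∑ l, α k l * γ k l := by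
      rw [Matrix.mulVec, dotProduct, Finset.mul_sum, ← Finset.sum_sub_distrib]
      apply Finset.sum_congr rfl
      intros; ring
    have hexp : (∑ l, (X k i l - (X k).mulVec vk i * α k l - UK1 i * γ k l) ^ 2)
        = (∑ l, (X k i l - UK1 i * γ k l) ^ 2)
          - 2 * (X k).mulVec vk i * (∑ l, (X k i l - UK1 i * γ k l) * α k l)
          + ((X k).mulVec vk i) ^ 2 * (∑ l, (α k l) ^ 2) := by
      rw [Finset.mul_sum, Finset.mul_sum, ← Finset.sum_sub_distrib, ← Finset.sum_add_distrib]
      apply Finset.sum_congr rfl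
      intros; ring
    have hTu : (∑ j ∈ Finset.univ.erase k, β k * β j * (X j).mulVec (vfix j) i)
        = β k * T i := by
      rw [hT, Finset.mul_sum]
      apply Finset.sum_congr rfl
      intros; ring
    have hkey : (w k + (β k) ^ 2) * u i
        = β k * (y i - T i - βK1 * UK1 i)
          + w k * ((X k).mulVec (α k) i - UK1 i * ∑ l, α k l * γ k l) := by
      rw [hu]
      simp only
      rw [hTu]
      field_simp
      ring
    rw [hexp, hPQ, hα]
    linear_combination 2 * (X k).mulVec vk i * hkey
  rw [Finset.mul_sum (f := fun i => ∑ l, (X k i l - (X k).mulVec vk i * α k l - UK1 i * γ k l) ^ 2),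
      Finset.mul_sum (f := fun i => (u i - (X k).mulVec vk i) ^ 2),
      ← add_assoc, ← Finset.sum_add_distrib, ← add_assoc, ← Finset.sum_add_distrib]
  congr 1
  exact Finset.sum_congr rfl fun i _ => main i
end
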